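/- arXiv:0812.3933 — 3 statements merged into one kernel-verified Lean document; each statement's English description precedes it below -/
import Mathlib

section
/- For every permutation π, the prefix reversal / prefix transposition / prefix transreversal distance satisfies d_RTT(π) ≤ b(π) − 1; i.e., π can be transformed into the identity permutation by at most b(π) − 1 operations, each a prefix reversal, a prefix transposition, or a prefix transreversal. -/
/-- A permutation on `n` elements: a list `[π₀, π₁, …, π_{n+1}]` of distinct
naturals that is a rearrangement of `0, 1, …, n+1` with `π₀ = 0` and
`π_{n+1} = n+1`. -/
def IsPerm (n : ℕ) (π : List ℕ) : Prop :=
  π.Perm (List.range (n + 2)) ∧ π.getD 0 0 = 0 ∧ π.getD (n + 1) 0 = n + 1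

/-- Breakpoint count `b(π)`: `1` plus the number of indices `i` with
`2 ≤ i ≤ n+1` and `|π_i − π_{i−1}| ≠ 1` (these are exactly the consecutive
pairs of the tail `π₁, …, π_{n+1}`). -/
def bp (π : List ℕ) : ℕ :=
  1 + ((π.drop 1).zip (π.drop 2)).countP
        (fun p => !(p.1 + 1 == p.2 || p.2 + 1 == p.1))

/-- Redefined breakpoint count `b′(π)`: the number of indices `i` with
`1 ≤ i ≤ n+1` and `|π_i − π_{i−1}| ≠ 1`. -/
def bp' (π : List ℕ) : ℕ :=
  (π.zip (π.drop 1)).countP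
    (fun p => !(p.1 + 1 == p.2 || p.2 + 1 == p.1))

/-- Prefix reversal `β(1,j)`: `[π₀, π_{j−1}, …, π₁, π_j, …, π_{n+1}]`. -/
def prefixReversal (π : List ℕ) (j : ℕ) : List ℕ :=
  π.take 1 ++ ((π.drop 1).take (j - 1)).reverse ++ π.drop j

/-- Prefix transposition `τ(1,j,k)`:
`[π₀, π_j, …, π_{k−1}, π₁, …, π_{j−1}, π_k, …, π_{n+1}]`. -/
def prefixTransposition (π : List ℕ) (j k : ℕ) : List ℕ :=
  π.take 1 ++ (π.drop j).take (k - j) ++ (π.drop 1).take (j - 1) ++ π.drop k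

/-- Prefix transreversal `βτ(1,j,k)`:
`[π₀, π_j, …, π_{k−1}, π_{j−1}, …, π₁, π_k, …, π_{n+1}]`. -/
def prefixTransreversal (π : List ℕ) (j k : ℕ) : List ℕ :=
  π.take 1 ++ (π.drop j).take (k - j) ++ ((π.drop 1).take (j - 1)).reverse ++ π.drop k

/-- A prefix operation: a prefix reversal, a prefix transposition, or a
prefix transreversal. -/
inductive PrefOp
  | rev (j : ℕ)
  | trans (j k : ℕ)
  | transrev (j k : ℕ)

/-- Apply a prefix operation to a permutation. -/
def PrefOp.apply (π : List ℕ) : PrefOp → List ℕ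
  | .rev j => prefixReversal π j
  | .trans j k => prefixTransposition π j k
  | .transrev j k => prefixTransreversal π j k

/-- Validity of a prefix operation on a permutation of `n` elements:
`3 ≤ j ≤ n+1` for a prefix reversal, `2 ≤ j < k ≤ n+1` for a prefix
transposition or a prefix transreversal. -/
def PrefOp.Valid (n : ℕ) : PrefOp → Prop
  | .rev j => 3 ≤ j ∧ j ≤ n + 1
  | .trans j k => 2 ≤ j ∧ j < k ∧ k ≤ n + 1
  | .transrev j k => 2 ≤ j ∧ j < k ∧ k ≤ n + 1

/-- Is the operation a prefix reversal? -/
def PrefOp.isRev : PrefOp → Bool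
  | .rev _ => true
  | _ => false

/-- Is the operation a prefix transreversal? -/
def PrefOp.isTransrev : PrefOp → Bool
  | .transrev _ _ => true
  | _ => false

/-- Apply a sequence of prefix operations, left to right. -/
def applySeq : List ℕ → List PrefOp → List ℕ
  | π, [] => π
  | π, o :: os => applySeq (o.apply π) os

/-- All operations in the sequence are valid for permutations of `n` elements. -/
def ValidSeq (n : ℕ) (ops : List PrefOp) : Prop :=
  ∀ o ∈ ops, o.Valid n

/-- `fm π` is `m(π) + 1`, where `m(π)` is the largest index `m` such that
`π_i = i` for all `0 ≤ i ≤ m`; i.e. the length of the longest already-sorted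
prefix of `π`. -/
def fm (π : List ℕ) : ℕ :=
  ((List.range π.length).takeWhile (fun i => π.getD i 0 == i)).length

/-- Forward-march prefix reversal: reverses the segment
`π_{m(π)+1}, …, π_{j−1}` in place. -/
def fmPrefixReversal (π : List ℕ) (j : ℕ) : List ℕ :=
  π.take (fm π) ++ ((π.drop (fm π)).take (j - fm π)).reverse ++ π.drop j

/-- Forward-march prefix transposition: cuts the segment
`π_{m(π)+1}, …, π_{j−1}` and pastes it between `π_{k−1}` and `π_k`. -/
def fmPrefixTransposition (π : List ℕ) (j k : ℕ) : List ℕ :=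
  π.take (fm π) ++ (π.drop j).take (k - j) ++
    (π.drop (fm π)).take (j - fm π) ++ π.drop k

/-- A forward-march operation: an FM prefix reversal or an FM prefix
transposition. -/
inductive FMOp
  | rev (j : ℕ)
  | trans (j k : ℕ)

/-- Apply a forward-march operation. -/
def FMOp.apply (π : List ℕ) : FMOp → List ℕ
  | .rev j => fmPrefixReversal π j
  | .trans j k => fmPrefixTransposition π j k

/-- Validity of a forward-march operation on a permutation `π` of `n`
elements: `m(π)+3 ≤ j ≤ n+1` for an FM prefix reversal, and
`m(π)+2 ≤ j ≤ n`, `j < k ≤ n+1` for an FM prefix transposition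
(recall `fm π = m(π) + 1`). -/
def FMOp.Valid (n : ℕ) (π : List ℕ) : FMOp → Prop
  | .rev j => fm π + 2 ≤ j ∧ j ≤ n + 1
  | .trans j k => fm π + 1 ≤ j ∧ j ≤ n ∧ j < k ∧ k ≤ n + 1

/-- Is the forward-march operation an FM prefix reversal? -/
def FMOp.isRev : FMOp → Bool
  | .rev _ => true
  | _ => false

/-- Apply a sequence of forward-march operations, left to right. -/
def applyFMSeq : List ℕ → List FMOp → List ℕ
  | π, [] => π
  | π, o :: os => applyFMSeq (o.apply π) os

/-- Validity of a sequence of forward-march operations, where each operation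
must be valid for the permutation obtained after applying the previous ones. -/
def FMValidSeq (n : ℕ) : List ℕ → List FMOp → Prop
  | _, [] => True
  | π, o :: os => o.Valid n π ∧ FMValidSeq n (o.apply π) os

/-!
Write `π = 0 :: T`, so that `b(π) - 1` counts the breakpoints inside `T`. On `T`, a prefix
operation moves a nonempty block (possibly reversed) further to the right, never past the last
entry `n + 1`. If `T` has a breakpoint, its first maximal run is an interval `a, …, a + j` listed
in increasing or decreasing order; its successor `a + j + 1` lies to the right of it, and moving
the run next to that successor removes a breakpoint. A list without breakpoints that ends with
its maximum `n + 1` is sorted.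
-/


open List

def Adjacent (x y : ℕ) : Prop := x + 1 = y ∨ y + 1 = x

instance : DecidableRel Adjacent := fun _ _ => instDecidableOr

def breaks : List ℕ → ℕ
  | x :: y :: l => (if Adjacent x y then 0 else 1) + breaks (y :: l)
  | _ => 0

def junctionBreaks : Option ℕ → Option ℕ → ℕ
  | some x, some y => if Adjacent x y then 0 else 1
  | _, _ => 0

@[simp] lemma junctionBreaks_none_left (y : Option ℕ) : junctionBreaks none y = 0 := rfl

@[simp] lemma junctionBreaks_none_right (x : Option ℕ) : junctionBreaks x none = 0 := by
  cases x <;> rfl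

@[simp] lemma junctionBreaks_some_some (x y : ℕ) :
    junctionBreaks (some x) (some y) = if Adjacent x y then 0 else 1 := rfl

lemma junctionBreaks_comm (x y : Option ℕ) : junctionBreaks x y = junctionBreaks y x := by
  cases x <;> cases y <;> simp [Adjacent, or_comm]

@[simp] lemma breaks_nil : breaks [] = 0 := rfl

@[simp] lemma breaks_singleton (x : ℕ) : breaks [x] = 0 := rfl

lemma breaks_cons_cons (x y : ℕ) (l : List ℕ) :
    breaks (x :: y :: l) = junctionBreaks (some x) (some y) + breaks (y :: l) := rfl

lemma breaks_cons (x : ℕ) (l : List ℕ) :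
    breaks (x :: l) = junctionBreaks (some x) l.head? + breaks l := by
  cases l <;> simp [breaks_cons_cons]

theorem breaks_append (A B : List ℕ) :
    breaks (A ++ B) = breaks A + junctionBreaks A.getLast? B.head? + breaks B := by
  induction A with
  | nil => simp
  | cons x A ih =>
    rw [cons_append, breaks_cons, ih, breaks_cons]
    cases A <;> simp; omega

theorem breaks_reverse (l : List ℕ) : breaks l.reverse = breaks l := by
  induction l with
  | nil => rfl
  | cons x l ih =>
    rw [reverse_cons, breaks_append, ih, breaks_cons x l, junctionBreaks_comm]
    simp [Nat.add_comm]

theorem breaks_range' (a k : ℕ) : breaks (range' a k) = 0 := by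
  induction k generalizing a with
  | zero => rfl
  | succ k ih => rw [range'_succ, breaks_cons, ih]; cases k <;> simp [head?_range', Adjacent]

theorem breaks_eq_countP (l : List ℕ) :
    breaks l = (l.zip l.tail).countP (fun p => !(p.1 + 1 == p.2 || p.2 + 1 == p.1)) := by
  induction l with
  | nil => rfl
  | cons x l ih =>
    cases l with
    | nil => rfl
    | cons y l =>
      rw [breaks_cons_cons, ih]
      simp [countP_cons, Adjacent]
      split_ifs <;> simp_all <;> omega

theorem bp_cons (x : ℕ) (T : List ℕ) : bp (x :: T) = breaks T + 1 := by
  rw [bp, breaks_eq_countP]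
  simp [Nat.add_comm]

lemma reverse_range'_succ (a j : ℕ) :
    (range' a (j + 1)).reverse = (a + j) :: (range' a j).reverse := by
  simp [range'_concat]

theorem exists_range'_of_breaks_eq_zero {X : List ℕ} (hnd : X.Nodup) (hX : breaks X = 0)
    (hne : X ≠ []) : ∃ a j, X = range' a (j + 1) ∨ X = (range' a (j + 1)).reverse := by
  induction X with
  | nil => exact absurd rfl hne
  | cons x t ih =>
    rcases t with _ | ⟨y, t⟩
    · exact ⟨x, 0, Or.inl rfl⟩
    have hxy : Adjacent x y := by
      by_contra h; simp [breaks_cons_cons, h] at hX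
    have hx : x ∉ y :: t := (nodup_cons.mp hnd).1
    rw [breaks_cons_cons] at hX
    obtain ⟨a, j, ht | ht⟩ := ih (nodup_cons.mp hnd).2 (by omega) (cons_ne_nil y t)
    · rw [range'_succ] at ht
      obtain ⟨rfl, rfl⟩ := cons_eq_cons.mp ht
      rcases hxy with rfl | rfl
      · exact ⟨x, j + 1, Or.inl (by simp [range'_succ])⟩
      · cases j with
        | zero => exact ⟨y, 1, Or.inr rfl⟩
        | succ j => simp [range'_succ] at hx
    · rw [reverse_range'_succ] at ht
      obtain ⟨rfl, rfl⟩ := cons_eq_cons.mp ht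
      rcases hxy with hxy | rfl
      · cases j with
        | zero => exact ⟨x, 1, Or.inl (by simp at hxy; simp [← hxy, range'_succ])⟩
        | succ j => simp at hx; omega
      · exact ⟨a, j + 1, Or.inr (by simp [reverse_range'_succ, add_assoc])⟩

theorem exists_first_break {T : List ℕ} (hT : breaks T ≠ 0) :
    ∃ X R, T = X ++ R ∧ X ≠ [] ∧ breaks X = 0 ∧ breaks T = breaks R + 1 := by
  induction T with
  | nil => exact absurd rfl hT
  | cons x t ih =>
    rcases t with _ | ⟨y, t⟩
    · exact absurd rfl hT
    by_cases hxy : Adjacent x y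
    · rw [breaks_cons_cons] at hT ⊢
      obtain ⟨X, R, hXR, hX, hX0, hb⟩ := ih (by simpa [hxy] using hT)
      refine ⟨x :: X, R, by rw [hXR, cons_append], cons_ne_nil _ _, ?_, by simp [hxy, hb]⟩
      obtain ⟨z, X, rfl⟩ := exists_cons_of_ne_nil hX
      rw [breaks_cons_cons, hX0]
      simp_all
    · refine ⟨[x], y :: t, rfl, cons_ne_nil _ _, rfl, ?_⟩
      simp [breaks_cons_cons, hxy, Nat.add_comm]

def BlockMove {α : Type*} (T T' : List α) : Prop :=
  ∃ X Y Z X', X ≠ [] ∧ Z ≠ [] ∧ (X' = X ∨ X' = X.reverse) ∧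
    T = X ++ Y ++ Z ∧ T' = Y ++ X' ++ Z

namespace BlockMove

variable {α : Type*} {T T' : List α}

theorem perm (h : BlockMove T T') : T' ~ T := by
  obtain ⟨X, Y, Z, X', -, -, hX', rfl, rfl⟩ := h
  have hX : X' ~ X := by rcases hX' with rfl | rfl <;> simp [reverse_perm]
  exact ((hX.append_left Y).trans perm_append_comm).append_right Z

theorem getLast?_eq (h : BlockMove T T') : T'.getLast? = T.getLast? := by
  obtain ⟨X, Y, Z, X', -, hZ, -, rfl, rfl⟩ := h
  rw [getLast?_append_of_ne_nil _ hZ, getLast?_append_of_ne_nil _ hZ]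

theorem exists_prefOp {T T' : List ℕ} (h : BlockMove T T') (hne : T' ≠ T) {n : ℕ}
    (hn : T.length = n + 1) (x : ℕ) :
    ∃ op : PrefOp, op.Valid n ∧ op.apply (x :: T) = x :: T' := by
  obtain ⟨X, Y, Z, X', hX, hZ, hX', rfl, rfl⟩ := h
  have hXlen := length_pos_iff.mpr hX
  have hZlen := length_pos_iff.mpr hZ
  simp only [length_append] at hn
  rcases eq_or_ne Y [] with rfl | hY
  · obtain rfl : X' = X.reverse := hX'.resolve_left (by rintro rfl; simp at hne)
    have hX2 : 2 ≤ X.length := by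
      by_contra! h
      obtain ⟨y, rfl⟩ : ∃ y, X = [y] := length_eq_one_iff.mp (by omega)
      simp at hne
    refine ⟨.rev (X.length + 1), ⟨by omega, by omega⟩, ?_⟩
    simp [PrefOp.apply, prefixReversal]
  have hYlen := length_pos_iff.mpr hY
  rcases hX' with hX' | hX' <;> subst X'
  · refine ⟨.trans (X.length + 1) (X.length + Y.length + 1), ⟨by omega, by omega, by omega⟩, ?_⟩
    simp [PrefOp.apply, prefixTransposition]
  · refine ⟨.transrev (X.length + 1) (X.length + Y.length + 1),
      ⟨by omega, by omega, by omega⟩, ?_⟩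
    simp [PrefOp.apply, prefixTransreversal]

end BlockMove

theorem breaks_insert_run_before (Y Z : List ℕ) (a j : ℕ)
    (hY : ∀ w ∈ Y.getLast?, ¬Adjacent w (a + j + 1)) :
    breaks (Y ++ range' a (j + 1) ++ (a + j + 1) :: Z) ≤ breaks (Y ++ (a + j + 1) :: Z) := by
  have hrun : Adjacent (a + j) (a + j + 1) := Or.inl rfl
  have hjunction :
      junctionBreaks Y.getLast? (some a) ≤ junctionBreaks Y.getLast? (some (a + j + 1)) := by
    rcases hw : Y.getLast? with _ | w
    · simp
    · simp only [hw, Option.mem_def] at hY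
      simp only [junctionBreaks_some_some, hY, if_false]
      split_ifs <;> omega
  simp [breaks_append, breaks_cons, breaks_range', getLast?_range', head?_range', hrun]
  omega

theorem breaks_insert_run_after (Y Z : List ℕ) (a j z : ℕ) (hz : ¬Adjacent (a + j + 1) z) :
    breaks (Y ++ [a + j + 1] ++ (range' a (j + 1)).reverse ++ z :: Z)
      ≤ breaks (Y ++ (a + j + 1) :: z :: Z) := by
  have hrun : Adjacent (a + j + 1) (a + j) := Or.inr rfl
  simp [breaks_append, breaks_cons, breaks_reverse, breaks_range', getLast?_range', head?_range',
    hz, hrun]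
  split_ifs <;> omega

theorem exists_blockMove_breaks_le {X R : List ℕ} {a j M : ℕ}
    (hX : X = range' a (j + 1) ∨ X = (range' a (j + 1)).reverse)
    (hnd : (X ++ R).Nodup) (hv : a + j + 1 ∈ R)
    (hM : R.getLast? = some M) (hmax : ∀ w ∈ R, w ≤ M) :
    ∃ T', BlockMove (X ++ R) T' ∧ breaks T' ≤ breaks R := by
  -- Put the run `X` next to `a + j + 1`: just before it, or, if it is preceded by `a + j + 2`,
  -- reversed just after it.  Either way the breakpoint after `X` disappears and at most one
  -- new breakpoint replaces the one that `a + j + 1` had on the side where `X` is inserted.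
  have hXne : X ≠ [] := by rcases hX with rfl | rfl <;> simp
  have hhi : a + j ∉ R := fun h =>
    (nodup_append.mp hnd).2.2 _ (by rcases hX with rfl | rfl <;> simp) _ h rfl
  obtain ⟨Y, Z, rfl⟩ := append_of_mem hv
  by_cases hY : Y.getLast? = some (a + j + 2)
  · have hvY : a + j + 2 ∈ Y := mem_of_getLast? hY
    obtain ⟨z, Z, rfl⟩ : ∃ z Z', Z = z :: Z' := by
      refine exists_cons_of_ne_nil fun hZ => ?_
      have := hmax _ (mem_append_left _ hvY)
      simp [hZ] at hM
      omega
    have hz : ¬Adjacent (a + j + 1) z := by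
      have hzY : z ≠ a + j + 2 := by
        rintro rfl
        exact (nodup_append.mp (nodup_append.mp hnd).2.1).2.2 _ hvY _ (by simp) rfl
      have hz' : z ≠ a + j := by rintro rfl; exact hhi (by simp)
      simp only [Adjacent]
      omega
    refine ⟨Y ++ [a + j + 1] ++ (range' a (j + 1)).reverse ++ z :: Z,
      ⟨X, Y ++ [a + j + 1], z :: Z, _, hXne, cons_ne_nil _ _, ?_, by simp, rfl⟩,
      breaks_insert_run_after Y Z a j z hz⟩
    rcases hX with rfl | rfl <;> simp
  · refine ⟨Y ++ range' a (j + 1) ++ (a + j + 1) :: Z,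
      ⟨X, Y, (a + j + 1) :: Z, _, hXne, cons_ne_nil _ _, ?_, by simp, rfl⟩,
      breaks_insert_run_before Y Z a j ?_⟩
    · rcases hX with rfl | rfl <;> simp
    · intro w hw
      have hw' : w ≠ a + j := by rintro rfl; exact hhi (mem_append_left _ (mem_of_getLast? hw))
      have : w ≠ a + j + 2 := by rintro rfl; exact hY hw
      simp only [Adjacent]
      omega

lemma range_succ_eq_cons_range' (n : ℕ) : range (n + 1) = 0 :: range' 1 n := by
  rw [range_eq_range', range'_succ]

section Sorting

variable {n : ℕ} {T : List ℕ}

theorem exists_blockMove_breaks_lt (hT : T ~ range' 1 (n + 1))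
    (hlast : T.getLast? = some (n + 1)) (hb : breaks T ≠ 0) :
    ∃ T', BlockMove T T' ∧ breaks T' < breaks T := by
  obtain ⟨X, R, rfl, hXne, hX0, hbT⟩ := exists_first_break hb
  have hnd : (X ++ R).Nodup := hT.nodup_iff.mpr nodup_range'
  have hdisj := (nodup_append.mp hnd).2.2
  obtain ⟨a, j, hX⟩ := exists_range'_of_breaks_eq_zero (nodup_append.mp hnd).1 hX0 hXne
  have hRne : R ≠ [] := by rintro rfl; simp [hX0] at hbT
  have hRlast : R.getLast? = some (n + 1) := by rwa [getLast?_append_of_ne_nil _ hRne] at hlast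
  have hmem : ∀ w, w ∈ X ++ R ↔ 1 ≤ w ∧ w ≤ n + 1 := by
    intro w; rw [hT.mem_iff, mem_range'_1]; omega
  have hXsub : ∀ w ∈ X, a ≤ w ∧ w ≤ a + j := by
    rcases hX with rfl | rfl <;> simp [mem_range'_1] <;> omega
  have hhi : a + j ∈ X := by rcases hX with rfl | rfl <;> simp
  have hv : a + j + 1 ∈ R := by
    have hne : a + j ≠ n + 1 := hdisj _ hhi _ (mem_of_getLast? hRlast)
    have hle := (hmem (a + j)).mp (mem_append_left _ hhi)
    rcases mem_append.mp ((hmem (a + j + 1)).mpr (by omega)) with h | h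
    · have := (hXsub _ h).2; omega
    · exact h
  obtain ⟨T', hmove, hle⟩ := exists_blockMove_breaks_le hX hnd hv hRlast
    fun w hw => ((hmem w).mp (mem_append_right _ hw)).2
  exact ⟨T', hmove, by omega⟩

theorem eq_range'_of_breaks_eq_zero (hT : T ~ range' 1 (n + 1))
    (hlast : T.getLast? = some (n + 1)) (hb : breaks T = 0) : T = range' 1 (n + 1) := by
  have hlen : T.length = n + 1 := by simpa using hT.length_eq
  have hmem : ∀ w, w ∈ T ↔ 1 ≤ w ∧ w ≤ n + 1 := by
    intro w; rw [hT.mem_iff, mem_range'_1]; omega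
  obtain ⟨a, j, rfl | rfl⟩ := exists_range'_of_breaks_eq_zero (hT.nodup_iff.mpr nodup_range') hb
    (ne_nil_of_length_pos (by omega))
  · have ha1 : 1 ≤ a := ((hmem a).mp (by simp)).1
    have ha2 : a ≤ 1 := by
      have := (hmem 1).mpr (by omega)
      simp [mem_range'_1] at this
      omega
    obtain rfl : j = n := by simpa using hlen
    obtain rfl : a = 1 := by omega
    rfl
  · simp [head?_range'] at hlast
    have hle := (hmem (a + j)).mp (by simp)
    simp at hlen
    obtain rfl : j = 0 := by omega
    obtain rfl : n = 0 := by omega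
    subst hlast; rfl

theorem exists_sorting_prefOps (hT : T ~ range' 1 (n + 1))
    (hlast : T.getLast? = some (n + 1)) :
    ∃ ops : List PrefOp, ValidSeq n ops ∧
      applySeq (0 :: T) ops = range (n + 2) ∧ ops.length ≤ breaks T := by
  induction hb : breaks T using Nat.strong_induction_on generalizing T with
  | _ b ih =>
    rcases eq_or_ne b 0 with rfl | hb0
    · refine ⟨[], by simp [ValidSeq], ?_, by simp⟩
      rw [applySeq, eq_range'_of_breaks_eq_zero hT hlast hb, range_succ_eq_cons_range']
    obtain ⟨T', hmove, hlt⟩ := exists_blockMove_breaks_lt hT hlast (by omega)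
    obtain ⟨op, hop, happly⟩ := hmove.exists_prefOp (fun h => by simp [h] at hlt)
      (by simpa using hT.length_eq) 0
    obtain ⟨ops, hops, hsort, hlen⟩ :=
      ih _ (by omega) (hmove.perm.trans hT) (hmove.getLast?_eq.trans hlast) rfl
    refine ⟨op :: ops, ?_, by rwa [applySeq, happly], by simp; omega⟩
    rintro o (_ | ⟨_, ho⟩)
    exacts [hop, hops o ho]

end Sorting

/-- every permutation can be sorted by at most `b(π) − 1`
operations, each a prefix reversal, a prefix transposition or a prefix
transreversal. -/
theorem sortRTT_upper_bound
    (n : ℕ) (π : List ℕ) (hπ : IsPerm n π) :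
    ∃ ops : List PrefOp, ValidSeq n ops ∧
      applySeq π ops = List.range (n + 2) ∧
      ops.length ≤ bp π - 1 := by
  obtain ⟨hperm, hhead, hlast⟩ := hπ
  obtain ⟨x, T, rfl⟩ : ∃ x T, π = x :: T :=
    exists_cons_of_ne_nil (by rintro rfl; simpa using hperm.length_eq)
  obtain rfl : x = 0 := hhead
  have hT : T ~ range' 1 (n + 1) := by
    rw [range_succ_eq_cons_range'] at hperm
    exact hperm.cons_inv
  have hTlast : T.getLast? = some (n + 1) := by
    have hlen : T.length = n + 1 := by simpa using hT.length_eq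
    rw [getLast?_eq_getElem?, hlen, Nat.add_sub_cancel, getElem?_eq_getElem (by omega)]
    simpa [getD_eq_getElem?_getD, getElem?_eq_getElem (show n < T.length by omega)] using hlast
  obtain ⟨ops, hops, hsort, hlen⟩ := exists_sorting_prefOps hT hTlast
  exact ⟨ops, hops, hsort, by rw [bp_cons]; omega⟩
end

section
/- For every permutation π = [π_0, π_1, …, π_{n+1}] and every prefix reversal β = β(1,j) with 3 ≤ j ≤ n+1, the redefined breakpoint count decreases by at most two, i.e., b′(π) − b′(π·β) ≤ 2. -/
/-!
Reversing a segment of a list reverses the order of its internal adjacent pairs, and whether a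
pair is a breakpoint does not depend on its orientation; so only the two adjacencies at the
ends of the segment can change, and at most two breakpoints disappear.
-/

namespace List

variable {α : Type*} (r : α → α → Bool)

def countAdjacent (l : List α) : ℕ :=
  (l.zip (l.drop 1)).countP fun q => r q.1 q.2

@[simp] theorem countAdjacent_nil : countAdjacent r [] = 0 := rfl

@[simp] theorem countAdjacent_singleton (a : α) : countAdjacent r [a] = 0 := rfl

theorem countAdjacent_cons_cons (a b : α) (l : List α) :
    countAdjacent r (a :: b :: l) = countAdjacent r (b :: l) + if r a b then 1 else 0 := by
  simp [countAdjacent, countP_cons]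

theorem countAdjacent_cons_le (a : α) (l : List α) :
    countAdjacent r (a :: l) ≤ countAdjacent r l + 1 := by
  cases l with
  | nil => simp
  | cons b l => rw [countAdjacent_cons_cons]; split <;> omega

theorem countAdjacent_le_cons (a : α) (l : List α) :
    countAdjacent r l ≤ countAdjacent r (a :: l) := by
  cases l with
  | nil => simp
  | cons b l => rw [countAdjacent_cons_cons]; omega

theorem countAdjacent_append_le (l₁ l₂ : List α) :
    countAdjacent r (l₁ ++ l₂) ≤ countAdjacent r l₁ + countAdjacent r l₂ + 1 := by
  induction l₁ with
  | nil => simp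
  | cons a l₁ ih =>
    cases l₁ with
    | nil => simpa using countAdjacent_cons_le r a l₂
    | cons b l₁ =>
      rw [cons_append] at ih ⊢
      rw [cons_append, countAdjacent_cons_cons, countAdjacent_cons_cons]
      omega

theorem add_countAdjacent_le_countAdjacent_append (l₁ l₂ : List α) :
    countAdjacent r l₁ + countAdjacent r l₂ ≤ countAdjacent r (l₁ ++ l₂) := by
  induction l₁ with
  | nil => simp
  | cons a l₁ ih =>
    cases l₁ with
    | nil => simpa using countAdjacent_le_cons r a l₂
    | cons b l₁ =>
      rw [cons_append] at ih ⊢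
      rw [cons_append, countAdjacent_cons_cons, countAdjacent_cons_cons]
      omega

theorem countAdjacent_append_pair (l : List α) (a b : α) :
    countAdjacent r (l ++ [a, b]) = countAdjacent r (l ++ [a]) + if r a b then 1 else 0 := by
  induction l with
  | nil => exact countAdjacent_cons_cons r a b []
  | cons c l ih =>
    obtain ⟨d, m, hd⟩ := exists_cons_of_ne_nil (append_ne_nil_of_right_ne_nil l (cons_ne_nil a []))
    have hd' : l ++ [a, b] = d :: (m ++ [b]) := by
      rw [← singleton_append, ← append_assoc, hd, cons_append]
    rw [cons_append, cons_append, hd, hd', countAdjacent_cons_cons, countAdjacent_cons_cons,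
      ← hd', ← hd, ih]
    omega

variable {r}

theorem countAdjacent_reverse (hr : ∀ a b, r a b = r b a) (l : List α) :
    countAdjacent r l.reverse = countAdjacent r l := by
  cases l with
  | nil => rfl
  | cons a l =>
    induction l generalizing a with
    | nil => simp
    | cons b l ih =>
      rw [reverse_cons, reverse_cons, append_assoc, singleton_append, countAdjacent_append_pair,
        ← reverse_cons, ih, countAdjacent_cons_cons r a, hr]

theorem countAdjacent_le_countAdjacent_reverse_infix (hr : ∀ a b, r a b = r b a)
    (l₁ l₂ l₃ : List α) :
    countAdjacent r (l₁ ++ l₂ ++ l₃) ≤ countAdjacent r (l₁ ++ l₂.reverse ++ l₃) + 2 := by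
  have hsplit₁ := countAdjacent_append_le r (l₁ ++ l₂) l₃
  have hsplit₂ := countAdjacent_append_le r l₁ l₂
  have hjoin₁ := add_countAdjacent_le_countAdjacent_append r (l₁ ++ l₂.reverse) l₃
  have hjoin₂ := add_countAdjacent_le_countAdjacent_append r l₁ l₂.reverse
  rw [countAdjacent_reverse hr] at hjoin₂
  omega

end List

open List

def isBreakpoint (a b : ℕ) : Bool := !(a + 1 == b || b + 1 == a)

theorem isBreakpoint_comm (a b : ℕ) : isBreakpoint a b = isBreakpoint b a := by
  simp only [isBreakpoint, Bool.or_comm]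

theorem bp'_eq_countAdjacent (π : List ℕ) : bp' π = countAdjacent isBreakpoint π := rfl

theorem prefixReversal_removes_at_most_two_bp'_general
    (π : List ℕ)
    (j : ℕ) (hj1 : 3 ≤ j) :
    bp' π - bp' (prefixReversal π j) ≤ 2 := by
  have hsplit : π = π.take 1 ++ (π.drop 1).take (j - 1) ++ π.drop j := by
    have hdrop : π.drop j = (π.drop 1).drop (j - 1) := by rw [drop_drop]; congr 1; omega
    rw [hdrop, append_assoc, take_append_drop, take_append_drop]
  have hbound := countAdjacent_le_countAdjacent_reverse_infix isBreakpoint_comm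
    (π.take 1) ((π.drop 1).take (j - 1)) (π.drop j)
  rw [← hsplit] at hbound
  rw [bp'_eq_countAdjacent, bp'_eq_countAdjacent, prefixReversal]
  omega

/-- a prefix reversal removes at most two redefined
breakpoints. -/
theorem prefixReversal_removes_at_most_two_bp'
    (n : ℕ) (π : List ℕ) (hπ : IsPerm n π)
    (j : ℕ) (hj1 : 3 ≤ j) (hj2 : j ≤ n + 1) :
    bp' π - bp' (prefixReversal π j) ≤ 2 :=
  prefixReversal_removes_at_most_two_bp'_general π j hj1
end

section
/- For every permutation π = [π_0, π_1, …, π_{n+1}] and every prefix transposition τ = τ(1,j,k) with 2 ≤ j < k ≤ n+1, the redefined breakpoint count decreases by at most three, i.e., b′(π) − b′(π·τ) ≤ 3. -/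
/-!
Cut `π` into the blocks `A = [π₀]`, `B = π₁ … π_{j−1}`, `C = π_j … π_{k−1}`, `D = π_k … π_{n+1}`;
the prefix transposition turns `A B C D` into `A C B D`. Breakpoints inside a block survive, so
only the three junctions `A|B`, `B|C`, `C|D` of `π` can be lost: `b′` of a concatenation is the
sum over the pieces plus at most one per junction.
-/

lemma bp'_nil : bp' [] = 0 := rfl

lemma bp'_singleton (a : ℕ) : bp' [a] = 0 := rfl

lemma bp'_cons_cons (a b : ℕ) (l : List ℕ) :
    bp' (a :: b :: l) = bp' (b :: l) + if a + 1 = b ∨ b + 1 = a then 0 else 1 := by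
  simp only [bp', List.drop_one, List.tail_cons, List.zip_cons_cons, List.countP_cons]
  split_ifs with h <;> simp_all

lemma bp'_append_cons (x : List ℕ) (a : ℕ) (y : List ℕ) :
    bp' (x ++ a :: y) = bp' (x ++ [a]) + bp' (a :: y) := by
  induction x with
  | nil => simp [bp'_singleton]
  | cons c x ih =>
    cases x with
    | nil => simp [bp'_cons_cons, bp'_singleton, add_comm]
    | cons d x =>
      simp only [List.cons_append] at ih ⊢
      rw [bp'_cons_cons, bp'_cons_cons, ih]
      ring

lemma bp'_append_cons_cons (x : List ℕ) (a b : ℕ) (y : List ℕ) :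
    bp' (x ++ [a] ++ b :: y) =
      bp' (x ++ [a]) + bp' (b :: y) + if a + 1 = b ∨ b + 1 = a then 0 else 1 := by
  rw [List.append_assoc, List.singleton_append, bp'_append_cons, bp'_cons_cons]
  ring

lemma bp'_add_bp'_le_bp'_append (x y : List ℕ) : bp' x + bp' y ≤ bp' (x ++ y) := by
  rcases y with _ | ⟨b, y⟩
  · simp [bp'_nil]
  rcases List.eq_nil_or_concat' x with rfl | ⟨x, a, rfl⟩
  · simp [bp'_nil]
  rw [bp'_append_cons_cons]
  omega

lemma bp'_append_le (x y : List ℕ) : bp' (x ++ y) ≤ bp' x + bp' y + 1 := by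
  rcases y with _ | ⟨b, y⟩
  · simp [bp'_nil]
  rcases List.eq_nil_or_concat' x with rfl | ⟨x, a, rfl⟩
  · simp [bp'_nil]
  rw [bp'_append_cons_cons]
  split <;> omega

theorem bp'_le_bp'_swap_middle_add_three (a b c d : List ℕ) :
    bp' (a ++ b ++ c ++ d) ≤ bp' (a ++ c ++ b ++ d) + 3 := by
  have hsplit := calc
    bp' (a ++ b ++ c ++ d) ≤ bp' (a ++ b ++ c) + bp' d + 1 := bp'_append_le _ _
    _ ≤ bp' (a ++ b) + bp' c + bp' d + 2 := by linarith [bp'_append_le (a ++ b) c]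
    _ ≤ bp' a + bp' b + bp' c + bp' d + 3 := by linarith [bp'_append_le a b]
  have hmerge := calc
    bp' a + bp' c + bp' b + bp' d ≤ bp' (a ++ c) + bp' b + bp' d := by
      linarith [bp'_add_bp'_le_bp'_append a c]
    _ ≤ bp' (a ++ c ++ b) + bp' d := by linarith [bp'_add_bp'_le_bp'_append (a ++ c) b]
    _ ≤ bp' (a ++ c ++ b ++ d) := bp'_add_bp'_le_bp'_append _ _
  omega

lemma List.take_append_take_drop_append_take_drop_append_drop {α : Type*} (l : List α)
    {i j k : ℕ} (hij : i ≤ j) (hjk : j ≤ k) :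
    l.take i ++ (l.drop i).take (j - i) ++ (l.drop j).take (k - j) ++ l.drop k = l := by
  have hj : l.drop j = (l.drop i).drop (j - i) := by rw [List.drop_drop, Nat.add_sub_cancel' hij]
  have hk : l.drop k = (l.drop j).drop (k - j) := by rw [List.drop_drop, Nat.add_sub_cancel' hjk]
  rw [hk, List.append_assoc, List.take_append_drop, hj, List.append_assoc,
    List.take_append_drop, List.take_append_drop]

theorem prefixTransposition_removes_at_most_three_bp'_general
    (π : List ℕ)
    (j k : ℕ) (hj : 2 ≤ j) (hjk : j < k) :
    bp' π - bp' (prefixTransposition π j k) ≤ 3 := by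
  have hblocks := π.take_append_take_drop_append_take_drop_append_drop
    (by omega : 1 ≤ j) hjk.le
  have hswap := bp'_le_bp'_swap_middle_add_three (π.take 1) ((π.drop 1).take (j - 1))
    ((π.drop j).take (k - j)) (π.drop k)
  rw [hblocks] at hswap
  unfold prefixTransposition
  omega

/-- a prefix transposition removes at most three redefined
breakpoints. -/
theorem prefixTransposition_removes_at_most_three_bp'
    (n : ℕ) (π : List ℕ) (hπ : IsPerm n π)
    (j k : ℕ) (hj : 2 ≤ j) (hjk : j < k) (hk : k ≤ n + 1) :
    bp' π - bp' (prefixTransposition π j k) ≤ 3 :=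
  prefixTransposition_removes_at_most_three_bp'_general π j k hj hjk
end
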